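/- arXiv:math/0301066 — 9 statements merged into one kernel-verified Lean document; each statement's English description precedes it below -/
import Mathlib

section
/- Let (V,c) be a braided vector space of diagonal type with matrix (q_{ij}) such that for all i ≠ j there exists h with q_{ih} ≠ q_{jh}. Then every braided vector space automorphism g of (V,c) is monomial: there exist a permutation σ of {1,...,n} and nonzero scalars λ_i with g(x_i) = λ_i x_{σ(i)}, and moreover q_{ij} = q_{σ(i)σ(j)} for all i,j. -/
open TensorProduct

/-- Let `(V, c)` be a braided vector space of diagonal type with matrix `(q_{ij})` such
that for all `i ≠ j` there exists `h` with `q_{ih} ≠ q_{jh}`. Then every braided vector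
space automorphism `g` of `(V, c)` is monomial: there are a permutation `σ` and nonzero
scalars `λᵢ` with `g(xᵢ) = λᵢ x_{σ(i)}`, and moreover `q_{ij} = q_{σ(i)σ(j)}`. -/
theorem stmt1 (k : Type*) [Field k] (n : ℕ)
    (q : Fin n → Fin n → k) (hq : ∀ i j, q i j ≠ 0)
    (c : ((Fin n → k) ⊗[k] (Fin n → k)) →ₗ[k] ((Fin n → k) ⊗[k] (Fin n → k)))
    (hc : ∀ i j, c ((Pi.single i 1 : Fin n → k) ⊗ₜ[k] (Pi.single j 1 : Fin n → k))
        = q i j • ((Pi.single j 1 : Fin n → k) ⊗ₜ[k] (Pi.single i 1 : Fin n → k)))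
    (hcond : ∀ i j, i ≠ j → ∃ h, q i h ≠ q j h)
    (lam : Matrix (Fin n) (Fin n) k)
    (hbij : Function.Bijective lam.mulVecLin)
    (hcomm : TensorProduct.map lam.mulVecLin lam.mulVecLin ∘ₗ c
        = c ∘ₗ TensorProduct.map lam.mulVecLin lam.mulVecLin) :
    ∃ (σ : Equiv.Perm (Fin n)) (l : Fin n → k),
      (∀ i, l i ≠ 0) ∧
      (∀ s i, lam s i = if s = σ i then l i else 0) ∧
      (∀ i j, q i j = q (σ i) (σ j)) := by
  classical
  have hsum : ∀ i, lam.mulVecLin (Pi.single i 1) = ∑ a, lam a i • (Pi.single a 1 : Fin n → k) := by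
    intro i
    ext s
    simp [Matrix.mulVecLin_apply, Matrix.mulVec_single, Finset.sum_apply, Pi.single_apply]
  -- the key scalar relation extracted from `hcomm`
  have key : ∀ i j s t, q i j * lam s i * lam t j = q s t * lam s i * lam t j := by
    intro i j s t
    let B : (Fin n → k) →ₗ[k] (Fin n → k) →ₗ[k] k :=
      LinearMap.mk₂ k (fun v w => v t * w s)
        (by intros; simp [add_mul]) (by intros; simp [mul_assoc])
        (by intros; simp [mul_add]) (by intros x c' y; simp; ring)
    have h0 := congrArg (TensorProduct.lift B) (LinearMap.congr_fun hcomm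
        ((Pi.single i 1 : Fin n → k) ⊗ₜ[k] (Pi.single j 1)))
    rw [LinearMap.comp_apply, LinearMap.comp_apply, hc i j] at h0
    rw [TensorProduct.map_tmul, hsum i, hsum j, TensorProduct.sum_tmul] at h0
    simp only [map_smul, TensorProduct.map_tmul, TensorProduct.tmul_sum,
      TensorProduct.smul_tmul_smul, map_sum, hc, TensorProduct.lift.tmul, B,
      LinearMap.mk₂_apply, smul_eq_mul, hsum, Finset.sum_apply, Pi.smul_apply, Pi.single_apply,
      smul_ite, mul_ite, mul_one, mul_zero, smul_zero, LinearMap.sum_apply, LinearMap.smul_apply,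
      Finset.sum_ite_irrel, Finset.sum_const_zero, Finset.sum_ite_eq, Finset.sum_ite_eq',
      Finset.mem_univ, if_true] at h0
    linear_combination h0
  have key' : ∀ i j s t, lam s i ≠ 0 → lam t j ≠ 0 → q i j = q s t := by
    intro i j s t hs ht
    have h1 := key i j s t
    rw [mul_assoc, mul_assoc] at h1
    exact mul_right_cancel₀ (mul_ne_zero hs ht) h1
  -- each column of `lam` is nonzero
  have hcol : ∀ i, ∃ s, lam s i ≠ 0 := by
    intro i
    by_contra h
    push_neg at h
    have h1 : lam.mulVecLin (Pi.single i 1) = lam.mulVecLin 0 := by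
      rw [map_zero]
      ext s
      simp [Matrix.mulVecLin_apply, Matrix.mulVec_single, h s]
    have h2 := hbij.1 h1
    have := congrFun h2 i
    simp [Pi.single_apply] at this
  -- each row of `lam` is nonzero
  have hrow : ∀ t, ∃ j, lam t j ≠ 0 := by
    intro t
    obtain ⟨v, hv⟩ := hbij.2 (Pi.single t 1)
    by_contra h
    push_neg at h
    have := congrFun hv t
    simp only [Matrix.mulVecLin_apply, Matrix.mulVec, dotProduct, Pi.single_apply,
      if_pos rfl] at this
    rw [Finset.sum_eq_zero (fun j _ => by rw [h j, zero_mul])] at this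
    exact one_ne_zero this.symm
  -- uniqueness of the nonzero entry in each column
  have huniq : ∀ i s t, lam s i ≠ 0 → lam t i ≠ 0 → s = t := by
    intro i s t hs ht
    by_contra hst
    obtain ⟨h, hqst⟩ := hcond s t hst
    obtain ⟨j, hj⟩ := hrow h
    have e1 : q i j = q s h := key' i j s h hs hj
    have e2 : q i j = q t h := key' i j t h ht hj
    exact hqst (e1 ▸ e2)
  choose σ0 hσ0 using hcol
  -- q is preserved by σ0
  have hqσ : ∀ i j, q i j = q (σ0 i) (σ0 j) := fun i j => key' i j _ _ (hσ0 i) (hσ0 j)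
  -- σ0 is injective, hence bijective
  have hinj : Function.Injective σ0 := by
    intro i j hij
    by_contra hne
    obtain ⟨h, hqh⟩ := hcond i j hne
    have e1 := hqσ i h
    have e2 := hqσ j h
    rw [hij] at e1
    exact hqh (e2 ▸ e1)
  have hbij0 : Function.Bijective σ0 := Finite.injective_iff_bijective.mp hinj
  refine ⟨Equiv.ofBijective σ0 hbij0, fun i => lam (σ0 i) i, fun i => hσ0 i, ?_, ?_⟩
  · intro s i
    simp only [Equiv.ofBijective_apply]
    by_cases hs : s = σ0 i
    · simp [hs]
    · rw [if_neg hs]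
      by_contra hz
      exact hs (huniq i s (σ0 i) hz (hσ0 i))
  · intro i j
    simpa using hqσ i j
end

section
/- Let (V,c) be a braided vector space of diagonal type with matrix (q_{ij}) such that for all i ≠ j, the 2×2 submatrix with entries q_{ii}, q_{ij}, q_{ji}, q_{jj} is not constant (i.e. these four entries are not all equal). Then the group GL(V,c) of braided vector space automorphisms is isomorphic to the semidirect product (k^×)^n ⋊ Autdiagr(c), where Autdiagr(c) = {σ ∈ S_n : q_{ij} = q_{σ(i)σ(j)} for all i,j}. -/
open TensorProduct

/-- The group `Autdiagr(c) = {σ ∈ Sₙ : q_{ij} = q_{σ(i)σ(j)} for all i, j}` of diagram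
automorphisms of a diagonal braiding with matrix `(q_{ij})`. -/
def Autdiagr {k : Type*} [Field k] {n : ℕ} (q : Fin n → Fin n → k) :
    Subgroup (Equiv.Perm (Fin n)) where
  carrier := {σ | ∀ i j, q i j = q (σ i) (σ j)}
  one_mem' := fun _ _ => rfl
  mul_mem' := fun {a b} ha hb i j => (hb i j).trans (ha (b i) (b j))
  inv_mem' := fun {σ} hσ i j => by
    have := hσ (σ⁻¹ i) (σ⁻¹ j)
    simpa using this.symm

/-- The action of `Autdiagr(c)` on the torus `(k^×)ⁿ` by permutation of coordinates. -/
def torusAct {k : Type*} [Field k] {n : ℕ} (q : Fin n → Fin n → k) :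
    Autdiagr q →* MulAut (Fin n → kˣ) where
  toFun σ :=
    { toFun := fun f => f ∘ (σ : Equiv.Perm (Fin n)).symm
      invFun := fun f => f ∘ (σ : Equiv.Perm (Fin n))
      left_inv := fun f => by funext i; simp
      right_inv := fun f => by funext i; simp
      map_mul' := fun f g => rfl }
  map_one' := by ext f i; rfl
  map_mul' := fun a b => by ext f i; rfl


section Helpers

variable {k : Type*} [Field k] {n : ℕ}

/-- diagonal-times-permutation linear automorphism -/
def dpe (t : Fin n → kˣ) (σ : Equiv.Perm (Fin n)) : (Fin n → k) ≃ₗ[k] (Fin n → k) where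
  toFun f := fun i => (t i : k) * f (σ.symm i)
  invFun f := fun i => ((t (σ i))⁻¹ : kˣ) * f (σ i)
  left_inv f := by funext i; simp
  right_inv f := by funext i; simp
  map_add' f g := by funext i; simp [mul_add]
  map_smul' r f := by funext i; simp [Pi.smul_apply, smul_eq_mul]; ring

lemma dpe_single (t : Fin n → kˣ) (σ : Equiv.Perm (Fin n)) (j : Fin n) :
    dpe t σ (Pi.single j 1) = (t (σ j) : k) • (Pi.single (σ j) 1 : Fin n → k) := by
  funext i
  simp only [dpe, LinearEquiv.coe_mk, LinearMap.coe_mk, AddHom.coe_mk, Pi.smul_apply,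
    smul_eq_mul, Pi.single_apply]
  rcases eq_or_ne i (σ j) with h | h
  · subst h; simp
  · have : σ.symm i ≠ j := fun hh => h (by rw [← hh]; simp)
    simp [h, this]

lemma dpe_mul (a b : Fin n → kˣ) (σ τ : Equiv.Perm (Fin n)) :
    dpe a σ * dpe b τ = dpe (a * (b ∘ σ.symm)) (σ * τ) := by
  refine LinearEquiv.ext fun f => ?_
  funext i
  show (a i : k) * ((b (σ.symm i) : k) * f (τ.symm (σ.symm i))) = _
  simp [dpe, Equiv.Perm.mul_apply, mul_assoc, Equiv.Perm.inv_def]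
  rfl

/-- evaluation functional on the tensor square -/
noncomputable def ev (l m : Fin n) : ((Fin n → k) ⊗[k] (Fin n → k)) →ₗ[k] k :=
  TensorProduct.lift (LinearMap.mk₂ k (fun f g => f l * g m)
    (fun f f' g => by simp [add_mul]) (fun r f g => by simp [mul_assoc])
    (fun f g g' => by simp [mul_add]) (fun r f g => by ring_nf; simp [mul_assoc, mul_comm, mul_left_comm]))

@[simp] lemma ev_tmul (l m : Fin n) (f g : Fin n → k) : ev l m (f ⊗ₜ[k] g) = f l * g m := rfl

lemma hrep (f : Fin n → k) : f = ∑ m', f m' • (Pi.single m' 1 : Fin n → k) := by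
  funext i
  simp [Finset.sum_apply, Pi.single_apply]

lemma expand_tmul (f g : Fin n → k) : f ⊗ₜ[k] g =
    ∑ m', ∑ l', (f m' * g l') •
      ((Pi.single m' 1 : Fin n → k) ⊗ₜ[k] (Pi.single l' 1 : Fin n → k)) := by
  conv_lhs => rw [hrep f, hrep g]
  rw [sum_tmul]
  refine Finset.sum_congr rfl fun m' _ => ?_
  rw [tmul_sum]
  refine Finset.sum_congr rfl fun l' _ => ?_
  rw [TensorProduct.smul_tmul_smul]

lemma c_tmul (q : Fin n → Fin n → k)
    (c : ((Fin n → k) ⊗[k] (Fin n → k)) →ₗ[k] ((Fin n → k) ⊗[k] (Fin n → k)))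
    (hc : ∀ i j, c ((Pi.single i 1 : Fin n → k) ⊗ₜ[k] (Pi.single j 1 : Fin n → k))
        = q i j • ((Pi.single j 1 : Fin n → k) ⊗ₜ[k] (Pi.single i 1 : Fin n → k)))
    (f g : Fin n → k) : c (f ⊗ₜ[k] g) =
    ∑ m', ∑ l', (f m' * g l' * q m' l') •
      ((Pi.single l' 1 : Fin n → k) ⊗ₜ[k] (Pi.single m' 1 : Fin n → k)) := by
  rw [expand_tmul f g, map_sum]
  refine Finset.sum_congr rfl fun m' _ => ?_
  rw [map_sum]
  refine Finset.sum_congr rfl fun l' _ => ?_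
  rw [map_smul, hc, smul_smul]

lemma ev_dsum (l m : Fin n) (s : Fin n → Fin n → k) :
    ev l m (∑ m', ∑ l', s m' l' •
      ((Pi.single l' 1 : Fin n → k) ⊗ₜ[k] (Pi.single m' 1 : Fin n → k))) = s m l := by
  rw [map_sum]
  simp only [map_sum, map_smul, ev_tmul, Pi.single_apply, smul_eq_mul]
  simp [Finset.sum_ite_eq, Finset.mul_sum, mul_ite]

lemma keyrel (q : Fin n → Fin n → k)
    (c : ((Fin n → k) ⊗[k] (Fin n → k)) →ₗ[k] ((Fin n → k) ⊗[k] (Fin n → k)))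
    (hc : ∀ i j, c ((Pi.single i 1 : Fin n → k) ⊗ₜ[k] (Pi.single j 1 : Fin n → k))
        = q i j • ((Pi.single j 1 : Fin n → k) ⊗ₜ[k] (Pi.single i 1 : Fin n → k)))
    (g : (Fin n → k) ≃ₗ[k] (Fin n → k))
    (hg : TensorProduct.map g.toLinearMap g.toLinearMap ∘ₗ c
          = c ∘ₗ TensorProduct.map g.toLinearMap g.toLinearMap)
    (i j l m : Fin n) :
    q i j * (g (Pi.single j 1) l * g (Pi.single i 1) m)
      = g (Pi.single i 1) m * g (Pi.single j 1) l * q m l := by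
  have h := congrArg (fun T : ((Fin n → k) ⊗[k] (Fin n → k)) →ₗ[k]
      ((Fin n → k) ⊗[k] (Fin n → k)) =>
      T ((Pi.single i 1 : Fin n → k) ⊗ₜ[k] (Pi.single j 1 : Fin n → k))) hg
  simp only [LinearMap.comp_apply] at h
  rw [hc, map_smul, map_tmul, map_tmul] at h
  simp only [LinearEquiv.coe_coe] at h
  rw [c_tmul q c hc] at h
  have h2 := congrArg (ev l m) h
  rw [map_smul, ev_tmul, ev_dsum] at h2
  simpa using h2

end Helpers

/-- Let `(V, c)` be a braided vector space of diagonal type with matrix `(q_{ij})` such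
that for all `i ≠ j` the four entries `q_{ii}, q_{ij}, q_{ji}, q_{jj}` are not all equal.
Then the group `GL(V, c)` of braided vector space automorphisms of `(V, c)` is isomorphic
to the semidirect product `(k^×)ⁿ ⋊ Autdiagr(c)`: there is an injective multiplicative
map from the semidirect product onto the set of braided vector space automorphisms. -/
theorem stmt2 (k : Type*) [Field k] (n : ℕ)
    (q : Fin n → Fin n → k) (hq : ∀ i j, q i j ≠ 0)
    (c : ((Fin n → k) ⊗[k] (Fin n → k)) →ₗ[k] ((Fin n → k) ⊗[k] (Fin n → k)))
    (hc : ∀ i j, c ((Pi.single i 1 : Fin n → k) ⊗ₜ[k] (Pi.single j 1 : Fin n → k))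
        = q i j • ((Pi.single j 1 : Fin n → k) ⊗ₜ[k] (Pi.single i 1 : Fin n → k)))
    (hcond : ∀ i j, i ≠ j → ¬(q i i = q i j ∧ q i i = q j i ∧ q i i = q j j)) :
    ∃ F : (Fin n → kˣ) ⋊[torusAct q] (Autdiagr q) →
        ((Fin n → k) ≃ₗ[k] (Fin n → k)),
      Function.Injective F ∧
      (∀ a b, F (a * b) = F a * F b) ∧
      Set.range F = {g : (Fin n → k) ≃ₗ[k] (Fin n → k) |
        TensorProduct.map g.toLinearMap g.toLinearMap ∘ₗ c
          = c ∘ₗ TensorProduct.map g.toLinearMap g.toLinearMap} := by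
  classical
  refine ⟨fun p => dpe p.left ((p.right : Autdiagr q) : Equiv.Perm (Fin n)), ?_, ?_, ?_⟩
  · -- injectivity
    intro p p' h
    set σ := ((p.right : Autdiagr q) : Equiv.Perm (Fin n)) with hσdef
    set τ := ((p'.right : Autdiagr q) : Equiv.Perm (Fin n)) with hτdef
    have h1 : ∀ j, ((p.left (σ j) : k)) • (Pi.single (σ j) 1 : Fin n → k)
        = ((p'.left (τ j) : k)) • (Pi.single (τ j) 1 : Fin n → k) := by
      intro j
      have h' : dpe p.left σ = dpe p'.left τ := h
      rw [← dpe_single, ← dpe_single, h']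
    have hστ : σ = τ := by
      refine Equiv.ext fun j => ?_
      have h2 := congrFun (h1 j) (σ j)
      simp only [Pi.smul_apply, smul_eq_mul] at h2
      by_contra hne
      rw [Pi.single_apply, Pi.single_apply, if_pos rfl, if_neg (fun hh : σ j = τ j => hne hh),
        mul_one, mul_zero] at h2
      exact (p.left (σ j)).ne_zero h2
    have hleft : p.left = p'.left := by
      funext l
      have h2 := congrFun (h1 (σ.symm l)) l
      rw [← hστ] at h2
      simp only [Equiv.apply_symm_apply, Pi.smul_apply, smul_eq_mul, Pi.single_eq_same,
        mul_one] at h2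
      exact Units.ext h2
    exact SemidirectProduct.ext hleft (Subtype.ext hστ)
  · -- multiplicativity
    intro a b
    show dpe _ _ = dpe _ _ * dpe _ _
    rw [dpe_mul]
    rfl
  · -- range
    ext g
    simp only [Set.mem_range, Set.mem_setOf_eq]
    constructor
    · rintro ⟨p, rfl⟩
      set t := p.left
      set σ := ((p.right : Autdiagr q) : Equiv.Perm (Fin n)) with hσdef
      have hσ : ∀ i j, q i j = q (σ i) (σ j) := (p.right : Autdiagr q).2
      refine Module.Basis.ext ((Pi.basisFun k (Fin n)).tensorProduct (Pi.basisFun k (Fin n)))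
        fun ⟨i, j⟩ => ?_
      rw [Module.Basis.tensorProduct_apply, Pi.basisFun_apply, Pi.basisFun_apply]
      simp only [LinearMap.comp_apply]
      rw [hc, map_smul, map_tmul, map_tmul]
      simp only [LinearEquiv.coe_coe]
      rw [dpe_single, dpe_single]
      rw [TensorProduct.smul_tmul_smul, TensorProduct.smul_tmul_smul, map_smul, hc,
        smul_smul, smul_smul, ← hσ i j]
      congr 1
      ring
    · intro hg
      have R := keyrel q c hc g hg
      -- at most one nonzero entry per column
      have key2 : ∀ i l m, g (Pi.single i 1) l ≠ 0 → g (Pi.single i 1) m ≠ 0 →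
          q i i = q m l := by
        intro i l m h1 h2
        apply mul_right_cancel₀ (mul_ne_zero h1 h2)
        rw [mul_comm (q m l)]
        rw [R i i l m]
        ring
      have uniq : ∀ i l m, g (Pi.single i 1) l ≠ 0 → g (Pi.single i 1) m ≠ 0 → l = m := by
        intro i l m hl hm
        by_contra hne
        exact hcond l m hne ⟨(key2 i l l hl hl).symm.trans (key2 i m l hm hl),
          (key2 i l l hl hl).symm.trans (key2 i l m hl hm),
          (key2 i l l hl hl).symm.trans (key2 i m m hm hm)⟩
      have exist : ∀ i, ∃ l, g (Pi.single i 1) l ≠ 0 := by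
        intro i
        by_contra h
        push_neg at h
        have hz : g (Pi.single i 1) = 0 := funext h
        have : (Pi.single i 1 : Fin n → k) = 0 := by
          rwa [LinearEquiv.map_eq_zero_iff] at hz
        have := congrFun this i
        simp at this
      choose σ₀ hσ₀ using exist
      have gform : ∀ i, g (Pi.single i 1)
          = (g (Pi.single i 1) (σ₀ i)) • (Pi.single (σ₀ i) 1 : Fin n → k) := by
        intro i
        funext l
        rcases eq_or_ne l (σ₀ i) with h | h
        · subst h; simp
        · have hz : g (Pi.single i 1) l = 0 := by
            by_contra h'
            exact h (uniq i l (σ₀ i) h' (hσ₀ i))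
          simp [Pi.single_apply, h, hz]
      have hinj : Function.Injective σ₀ := by
        intro i i' h
        by_contra hne
        obtain ⟨α, hαne, hα⟩ : ∃ α : k, α ≠ 0 ∧
            g (Pi.single i 1) = α • (Pi.single (σ₀ i') 1 : Fin n → k) :=
          ⟨g (Pi.single i 1) (σ₀ i), hσ₀ i, by rw [← h]; exact gform i⟩
        obtain ⟨β, hβne, hβ⟩ : ∃ β : k, β ≠ 0 ∧
            g (Pi.single i' 1) = β • (Pi.single (σ₀ i') 1 : Fin n → k) :=
          ⟨g (Pi.single i' 1) (σ₀ i'), hσ₀ i', gform i'⟩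
        have hx : g (β • (Pi.single i 1 : Fin n → k) - α • (Pi.single i' 1 : Fin n → k))
            = 0 := by
          rw [map_sub, map_smul, map_smul, hα, hβ, smul_smul, smul_smul, mul_comm, sub_self]
        rw [LinearEquiv.map_eq_zero_iff] at hx
        have h3 := congrFun hx i
        simp only [Pi.sub_apply, Pi.smul_apply, smul_eq_mul, Pi.zero_apply] at h3
        rw [Pi.single_eq_same, Pi.single_apply, if_neg (fun hh : i = i' => hne hh),
          mul_one, mul_zero, sub_zero] at h3
        exact hβne h3
      let σ : Equiv.Perm (Fin n) := Equiv.ofBijective σ₀ (Finite.injective_iff_bijective.mp hinj)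
      have hσcoe : ∀ i, σ i = σ₀ i := fun i => rfl
      have hσmem : σ ∈ Autdiagr q := by
        intro i j
        have h := R i j (σ₀ j) (σ₀ i)
        have hXne : g (Pi.single j 1) (σ₀ j) * g (Pi.single i 1) (σ₀ i) ≠ 0 :=
          mul_ne_zero (hσ₀ j) (hσ₀ i)
        apply mul_right_cancel₀ hXne
        rw [h, hσcoe, hσcoe]
        ring
      have tne : ∀ l, g (Pi.single (σ.symm l) 1) l ≠ 0 := by
        intro l
        have h1 : σ₀ (σ.symm l) = l := σ.apply_symm_apply l
        have := hσ₀ (σ.symm l)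
        rwa [h1] at this
      refine ⟨⟨fun l => Units.mk0 _ (tne l), ⟨σ, hσmem⟩⟩, ?_⟩
      apply LinearEquiv.toLinearMap_injective
      refine Module.Basis.ext (Pi.basisFun k (Fin n)) fun j => ?_
      rw [Pi.basisFun_apply]
      show dpe _ _ (Pi.single j 1) = g (Pi.single j 1)
      rw [dpe_single, gform j]
      simp only [Units.val_mk0, Equiv.symm_apply_apply]
      rfl
end

section
/- In the quantum Heisenberg algebra H = U_q^+(sl_3) with E_3 = E_1E_2 − q²E_2E_1 and Ē_3 = E_1E_2 − q^{−2}E_2E_1, the element Ω = (1 − q^{−4})E_3E_1E_2 + q^{−4}E_3² equals E_3·Ē_3, and Ω is central in H. -/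
/-- In the quantum Heisenberg algebra `H = U_q^+(sl_3)`, with `E₃ = E₁E₂ - q²E₂E₁` and
`Ē₃ = E₁E₂ - q⁻²E₂E₁`, the element `Ω = (1 - q⁻⁴)E₃E₁E₂ + q⁻⁴E₃²` equals `E₃·Ē₃`,
and `Ω` is central in `H` (i.e. commutes with every element of the subalgebra generated
by `E₁` and `E₂`). -/
theorem stmt5 (k : Type*) [Field k] (q : k) (hq : q ≠ 0)
    (hroot : ∀ n : ℕ, 0 < n → q ^ n ≠ 1)
    (A : Type*) [Ring A] [Algebra k A] (E1 E2 : A)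
    (hS1 : E1 ^ 2 * E2 - (q ^ 2 + q⁻¹ ^ 2) • (E1 * E2 * E1) + E2 * E1 ^ 2 = 0)
    (hS2 : E2 ^ 2 * E1 - (q ^ 2 + q⁻¹ ^ 2) • (E2 * E1 * E2) + E1 * E2 ^ 2 = 0)
    (E3 E3bar Ω : A)
    (hE3 : E3 = E1 * E2 - q ^ 2 • (E2 * E1))
    (hE3bar : E3bar = E1 * E2 - q⁻¹ ^ 2 • (E2 * E1))
    (hΩ : Ω = (1 - q⁻¹ ^ 4) • (E3 * E1 * E2) + q⁻¹ ^ 4 • E3 ^ 2) :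
    Ω = E3 * E3bar ∧ Ω * E1 = E1 * Ω ∧ Ω * E2 = E2 * Ω ∧
      ∀ x ∈ Algebra.adjoin k {E1, E2}, Ω * x = x * Ω := by
  have hq2 : q⁻¹ ^ 2 * q ^ 2 = 1 := by field_simp
  have hq2' : q ^ 2 * q⁻¹ ^ 2 = 1 := by field_simp
  -- key rearranged Serre relations
  have key1 : E1 * (E1 * E2) = (q ^ 2 + q⁻¹ ^ 2) • (E1 * (E2 * E1)) - E2 * (E1 * E1) := by
    have h : E1 * (E1 * E2) - ((q ^ 2 + q⁻¹ ^ 2) • (E1 * (E2 * E1)) - E2 * (E1 * E1)) = 0 := by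
      rw [← hS1]; simp only [pow_two, mul_assoc]; abel
    exact sub_eq_zero.mp h
  have key2 : E2 * (E2 * E1) = (q ^ 2 + q⁻¹ ^ 2) • (E2 * (E1 * E2)) - E1 * (E2 * E2) := by
    have h : E2 * (E2 * E1) - ((q ^ 2 + q⁻¹ ^ 2) • (E2 * (E1 * E2)) - E1 * (E2 * E2)) = 0 := by
      rw [← hS2]; simp only [pow_two, mul_assoc]; abel
    exact sub_eq_zero.mp h
  have h1 : E1 * E3 = q⁻¹ ^ 2 • (E3 * E1) := by
    simp only [hE3, mul_sub, sub_mul, smul_mul_assoc, mul_smul_comm, smul_sub, smul_smul,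
      mul_assoc, key1]
    match_scalars <;> field_simp <;> ring
  have h2 : E3 * E2 = q⁻¹ ^ 2 • (E2 * E3) := by
    simp only [hE3, mul_sub, sub_mul, smul_mul_assoc, mul_smul_comm, smul_sub, smul_smul,
      mul_assoc, key2]
    match_scalars <;> field_simp <;> ring
  have h3 : E1 * E3bar = q ^ 2 • (E3bar * E1) := by
    simp only [hE3bar, mul_sub, sub_mul, smul_mul_assoc, mul_smul_comm, smul_sub, smul_smul,
      mul_assoc, key1]
    match_scalars <;> field_simp <;> ring
  have h4 : E3bar * E2 = q ^ 2 • (E2 * E3bar) := by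
    simp only [hE3bar, mul_sub, sub_mul, smul_mul_assoc, mul_smul_comm, smul_sub, smul_smul,
      mul_assoc, key2]
    match_scalars <;> field_simp <;> ring
  have hOmega : Ω = E3 * E3bar := by
    rw [hΩ, hE3, hE3bar]
    simp only [pow_two, mul_sub, sub_mul, smul_mul_assoc, mul_smul_comm, smul_sub, smul_add,
      smul_smul, mul_assoc, sub_smul, one_smul]
    match_scalars <;> field_simp <;> ring
  have h1' : E3 * E1 = q ^ 2 • (E1 * E3) := by
    rw [h1, smul_smul, hq2', one_smul]
  have h3' : E3bar * E1 = q⁻¹ ^ 2 • (E1 * E3bar) := by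
    rw [h3, smul_smul, hq2, one_smul]
  have hc1 : Ω * E1 = E1 * Ω := by
    rw [hOmega, mul_assoc, h3', mul_smul_comm, ← mul_assoc, h1', smul_mul_assoc, smul_smul,
      hq2, one_smul, mul_assoc]
  have hc2 : Ω * E2 = E2 * Ω := by
    rw [hOmega, mul_assoc, h4, mul_smul_comm, ← mul_assoc, h2, smul_mul_assoc, smul_smul,
      hq2', one_smul, mul_assoc]
  refine ⟨hOmega, hc1, hc2, ?_⟩
  intro x hx
  induction hx using Algebra.adjoin_induction with
  | mem y hy =>
    rcases hy with rfl | hy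
    · exact hc1
    · rw [Set.mem_singleton_iff] at hy; subst hy; exact hc2
  | algebraMap r => exact (Algebra.commutes r Ω).symm
  | add y z _ _ ihy ihz => rw [mul_add, add_mul, ihy, ihz]
  | mul y z _ _ ihy ihz => rw [← mul_assoc, ihy, mul_assoc, ihz, ← mul_assoc]
end

section
/- Let U⁺ = U_q^+(g) for g of type B_2, generated by e_1, e_2 subject to e_1²e_2 − (q²+q^{−2})e_1e_2e_1 + e_2e_1² = 0 and e_2³e_1 − (q²+1+q^{−2})e_2²e_1e_2 + (q²+1+q^{−2})e_2e_1e_2² − e_1e_2³ = 0. Set e_3 = e_1e_2 − q²e_2e_1 and z = e_2e_3 − q²e_3e_2. Then e_1e_3 = q^{−2}e_3e_1, e_1z = ze_1, and e_2z = ze_2; in particular z is central in U⁺. -/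
/-- In `U⁺ = U_q⁺(g)` for `g` of type `B₂` (generated by `e₁, e₂` subject to the type `B₂`
quantum Serre relations), with `e₃ = e₁e₂ - q²e₂e₁` and `z = e₂e₃ - q²e₃e₂`, one has
`e₁e₃ = q⁻²e₃e₁`, `e₁z = ze₁` and `e₂z = ze₂`; in particular `z` is central in `U⁺`
(i.e. commutes with every element of the subalgebra generated by `e₁, e₂`). -/
theorem stmt6 (k : Type*) [Field k] [CharZero k] (q : k) (hq : q ≠ 0)
    (hroot : ∀ n : ℕ, 0 < n → q ^ n ≠ 1)
    (A : Type*) [Ring A] [Algebra k A] (e1 e2 : A)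
    (hS1 : e1 ^ 2 * e2 - (q ^ 2 + q⁻¹ ^ 2) • (e1 * e2 * e1) + e2 * e1 ^ 2 = 0)
    (hS2 : e2 ^ 3 * e1 - (q ^ 2 + 1 + q⁻¹ ^ 2) • (e2 ^ 2 * e1 * e2)
        + (q ^ 2 + 1 + q⁻¹ ^ 2) • (e2 * e1 * e2 ^ 2) - e1 * e2 ^ 3 = 0)
    (e3 z : A)
    (he3 : e3 = e1 * e2 - q ^ 2 • (e2 * e1))
    (hz : z = e2 * e3 - q ^ 2 • (e3 * e2)) :
    e1 * e3 = q⁻¹ ^ 2 • (e3 * e1) ∧ e1 * z = z * e1 ∧ e2 * z = z * e2 ∧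
      ∀ x ∈ Algebra.adjoin k {e1, e2}, z * x = x * z := by
  subst he3 hz
  have hS1l : e2 * (e1 ^ 2 * e2 - (q ^ 2 + q⁻¹ ^ 2) • (e1 * e2 * e1) + e2 * e1 ^ 2) = 0 := by
    rw [hS1, mul_zero]
  have hS1r : (e1 ^ 2 * e2 - (q ^ 2 + q⁻¹ ^ 2) • (e1 * e2 * e1) + e2 * e1 ^ 2) * e2 = 0 := by
    rw [hS1, zero_mul]
  have h1 : e1 * (e1 * e2 - q ^ 2 • (e2 * e1)) =
      q⁻¹ ^ 2 • ((e1 * e2 - q ^ 2 • (e2 * e1)) * e1) := by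
    simp only [pow_succ, pow_zero, one_mul, mul_assoc, mul_sub, sub_mul, smul_mul_assoc,
      mul_smul_comm, smul_smul, smul_sub] at hS1 ⊢
    linear_combination (norm := match_scalars <;> field_simp <;> ring) hS1
  have h2 : e1 * (e2 * (e1 * e2 - q ^ 2 • (e2 * e1)) -
      q ^ 2 • ((e1 * e2 - q ^ 2 • (e2 * e1)) * e2)) =
      (e2 * (e1 * e2 - q ^ 2 • (e2 * e1)) -
        q ^ 2 • ((e1 * e2 - q ^ 2 • (e2 * e1)) * e2)) * e1 := by
    simp only [pow_succ, pow_zero, one_mul, mul_assoc, mul_sub, sub_mul, smul_mul_assoc,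
      mul_smul_comm, smul_smul, smul_sub, mul_add, add_mul] at hS1l hS1r ⊢
    linear_combination (norm := match_scalars <;> field_simp <;> ring)
      (q ^ 2 : k) • hS1l - (q ^ 2 : k) • hS1r
  have h3 : e2 * (e2 * (e1 * e2 - q ^ 2 • (e2 * e1)) -
      q ^ 2 • ((e1 * e2 - q ^ 2 • (e2 * e1)) * e2)) =
      (e2 * (e1 * e2 - q ^ 2 • (e2 * e1)) -
        q ^ 2 • ((e1 * e2 - q ^ 2 • (e2 * e1)) * e2)) * e2 := by
    simp only [pow_succ, pow_zero, one_mul, mul_assoc, mul_sub, sub_mul, smul_mul_assoc,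
      mul_smul_comm, smul_smul, smul_sub] at hS2 ⊢
    linear_combination (norm := match_scalars <;> field_simp <;> ring) (-(q ^ 2) : k) • hS2
  refine ⟨h1, h2, h3, ?_⟩
  intro x hx
  induction hx using Algebra.adjoin_induction with
  | mem y hy =>
    rcases hy with rfl | hy
    · exact h2.symm
    · rw [Set.mem_singleton_iff] at hy; subst hy; exact h3.symm
  | algebraMap r => exact (Algebra.commutes r _).symm
  | add x y hx hy ihx ihy => rw [mul_add, add_mul, ihx, ihy]
  | mul x y hx hy ihx ihy => rw [← mul_assoc, ihx, mul_assoc, ihy, mul_assoc]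
end

section
/- In U⁺ = U_q^+(g) for g of type B_2, set e_3 = e_1e_2 − q²e_2e_1 and w = e_2e_3 − e_3e_2. Then e_1w = we_1 + (1 − q^{−2})e_3², e_2w = q²we_2, and e_3w = q^{−2}we_3. -/
/-- In `U⁺ = U_q⁺(g)` for `g` of type `B₂`, with `e₃ = e₁e₂ - q²e₂e₁` and
`w = e₂e₃ - e₃e₂`, one has `e₁w = we₁ + (1 - q⁻²)e₃²`, `e₂w = q²we₂` and
`e₃w = q⁻²we₃`. -/
theorem stmt7 (k : Type*) [Field k] [CharZero k] (q : k) (hq : q ≠ 0)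
    (hroot : ∀ n : ℕ, 0 < n → q ^ n ≠ 1)
    (A : Type*) [Ring A] [Algebra k A] (e1 e2 : A)
    (hS1 : e1 ^ 2 * e2 - (q ^ 2 + q⁻¹ ^ 2) • (e1 * e2 * e1) + e2 * e1 ^ 2 = 0)
    (hS2 : e2 ^ 3 * e1 - (q ^ 2 + 1 + q⁻¹ ^ 2) • (e2 ^ 2 * e1 * e2)
        + (q ^ 2 + 1 + q⁻¹ ^ 2) • (e2 * e1 * e2 ^ 2) - e1 * e2 ^ 3 = 0)
    (e3 w : A)
    (he3 : e3 = e1 * e2 - q ^ 2 • (e2 * e1))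
    (hw : w = e2 * e3 - e3 * e2) :
    e1 * w = w * e1 + (1 - q⁻¹ ^ 2) • e3 ^ 2 ∧
      e2 * w = q ^ 2 • (w * e2) ∧ e3 * w = q⁻¹ ^ 2 • (w * e3) := by
  set L1 : A := e1 ^ 2 * e2 - (q ^ 2 + q⁻¹ ^ 2) • (e1 * e2 * e1) + e2 * e1 ^ 2
    with hL1
  set L2 : A := e2 ^ 3 * e1 - (q ^ 2 + 1 + q⁻¹ ^ 2) • (e2 ^ 2 * e1 * e2)
      + (q ^ 2 + 1 + q⁻¹ ^ 2) • (e2 * e1 * e2 ^ 2) - e1 * e2 ^ 3 with hL2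
  have key1 : e1 * w - (w * e1 + (1 - q⁻¹ ^ 2) • e3 ^ 2)
      = (-1 : k) • (L1 * e2) + q ^ 2 • (e2 * L1) := by
    subst hw he3
    rw [hL1]
    simp only [pow_succ, pow_zero, one_mul, smul_sub, smul_add, sub_mul, add_mul,
      mul_sub, mul_add, smul_mul_assoc, mul_smul_comm, smul_smul, mul_assoc, neg_smul,
      one_smul]
    match_scalars <;> field_simp <;> ring
  have key2 : e2 * w - q ^ 2 • (w * e2) = (-(q ^ 2) : k) • L2 := by
    subst hw he3
    rw [hL2]
    simp only [pow_succ, pow_zero, one_mul, smul_sub, smul_add, sub_mul, add_mul,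
      mul_sub, mul_add, smul_mul_assoc, mul_smul_comm, smul_smul, mul_assoc, neg_smul,
      one_smul]
    match_scalars <;> field_simp <;> ring
  have key3 : e3 * w - q⁻¹ ^ 2 • (w * e3)
      = (-1 : k) • (L1 * e2 * e2) + (q ^ 2 + 1) • (e2 * L1 * e2)
        + (-(q ^ 2) : k) • (e2 * (e2 * L1)) + (-1 : k) • (e1 * L2)
        + q ^ 2 • (L2 * e1) := by
    subst hw he3
    rw [hL1, hL2]
    simp only [pow_succ, pow_zero, one_mul, smul_sub, smul_add, sub_mul, add_mul,
      mul_sub, mul_add, smul_mul_assoc, mul_smul_comm, smul_smul, mul_assoc, neg_smul,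
      one_smul]
    match_scalars <;> field_simp <;> ring
  rw [hS1] at key1 key3
  rw [hS2] at key2 key3
  simp only [mul_zero, zero_mul, smul_zero, add_zero, zero_add] at key1 key2 key3
  refine ⟨?_, ?_, ?_⟩
  · have := sub_eq_zero.mp key1; linear_combination (norm := abel) this
  · have := sub_eq_zero.mp key2; linear_combination (norm := abel) this
  · have := sub_eq_zero.mp key3; linear_combination (norm := abel) this
end

section
/- In U⁺ = U_q^+(g) for g of type B_2, with e_3 = e_1e_2 − q²e_2e_1, w = e_2e_3 − e_3e_2, and z' = e_1w − q^{−4}we_1, the element z' is central: z'e_1 = e_1z' and z'e_2 = e_2z'. -/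
set_option maxHeartbeats 2000000


/-- In `U⁺ = U_q⁺(g)` for `g` of type `B₂`, with `e₃ = e₁e₂ - q²e₂e₁`, `w = e₂e₃ - e₃e₂`
and `z' = e₁w - q⁻⁴we₁`, the element `z'` is central: `z'e₁ = e₁z'` and `z'e₂ = e₂z'`. -/
theorem stmt8 (k : Type*) [Field k] [CharZero k] (q : k) (hq : q ≠ 0)
    (hroot : ∀ n : ℕ, 0 < n → q ^ n ≠ 1)
    (A : Type*) [Ring A] [Algebra k A] (e1 e2 : A)
    (hS1 : e1 ^ 2 * e2 - (q ^ 2 + q⁻¹ ^ 2) • (e1 * e2 * e1) + e2 * e1 ^ 2 = 0)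
    (hS2 : e2 ^ 3 * e1 - (q ^ 2 + 1 + q⁻¹ ^ 2) • (e2 ^ 2 * e1 * e2)
        + (q ^ 2 + 1 + q⁻¹ ^ 2) • (e2 * e1 * e2 ^ 2) - e1 * e2 ^ 3 = 0)
    (e3 w z' : A)
    (he3 : e3 = e1 * e2 - q ^ 2 • (e2 * e1))
    (hw : w = e2 * e3 - e3 * e2)
    (hz' : z' = e1 * w - q⁻¹ ^ 4 • (w * e1)) :
    z' * e1 = e1 * z' ∧ z' * e2 = e2 * z' := by
  constructor
  · have key : z' * e1 - e1 * z' =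
        (q⁻¹ ^ 4 - q⁻¹ ^ 2 - q ^ 2) •
          (e1 * e2 * (e1 ^ 2 * e2 - (q ^ 2 + q⁻¹ ^ 2) • (e1 * e2 * e1) + e2 * e1 ^ 2))
        + (1 - q⁻¹ ^ 2) •
          (e2 * e1 * (e1 ^ 2 * e2 - (q ^ 2 + q⁻¹ ^ 2) • (e1 * e2 * e1) + e2 * e1 ^ 2))
        + e1 * ((e1 ^ 2 * e2 - (q ^ 2 + q⁻¹ ^ 2) • (e1 * e2 * e1) + e2 * e1 ^ 2) * e2)
        + q⁻¹ ^ 2 •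
          (e2 * ((e1 ^ 2 * e2 - (q ^ 2 + q⁻¹ ^ 2) • (e1 * e2 * e1) + e2 * e1 ^ 2) * e1))
        + (q⁻¹ ^ 2 - 1) •
          ((e1 ^ 2 * e2 - (q ^ 2 + q⁻¹ ^ 2) • (e1 * e2 * e1) + e2 * e1 ^ 2) * (e1 * e2))
        + (q ^ 2 - 1 - q⁻¹ ^ 4) •
          ((e1 ^ 2 * e2 - (q ^ 2 + q⁻¹ ^ 2) • (e1 * e2 * e1) + e2 * e1 ^ 2) * (e2 * e1)) := by
      subst hz' hw he3
      simp only [pow_succ, pow_zero, one_mul, mul_sub, sub_mul, mul_add, add_mul,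
        smul_mul_assoc, mul_smul_comm, smul_smul, smul_sub, smul_add, mul_assoc]
      match_scalars
      all_goals try simp only [mul_one, one_mul, mul_assoc, inv_mul_cancel_left₀ hq,
        mul_inv_cancel_left₀ hq, inv_mul_cancel₀ hq, mul_inv_cancel₀ hq]
      all_goals try ring
      all_goals norm_num
    rw [hS1] at key
    simp only [mul_zero, zero_mul, smul_zero, add_zero] at key
    exact sub_eq_zero.mp key
  · have key : z' * e2 - e2 * z' =
        (1 - q⁻¹ ^ 2) •
          (e1 * (e2 ^ 3 * e1 - (q ^ 2 + 1 + q⁻¹ ^ 2) • (e2 ^ 2 * e1 * e2)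
            + (q ^ 2 + 1 + q⁻¹ ^ 2) • (e2 * e1 * e2 ^ 2) - e1 * e2 ^ 3))
        + (1 - q⁻¹ ^ 2) •
          ((e2 ^ 3 * e1 - (q ^ 2 + 1 + q⁻¹ ^ 2) • (e2 ^ 2 * e1 * e2)
            + (q ^ 2 + 1 + q⁻¹ ^ 2) • (e2 * e1 * e2 ^ 2) - e1 * e2 ^ 3) * e1)
        - e2 * e2 * (e1 ^ 2 * e2 - (q ^ 2 + q⁻¹ ^ 2) • (e1 * e2 * e1) + e2 * e1 ^ 2)
        + (1 + q⁻¹ ^ 2) •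
          (e2 * ((e1 ^ 2 * e2 - (q ^ 2 + q⁻¹ ^ 2) • (e1 * e2 * e1) + e2 * e1 ^ 2) * e2))
        - q⁻¹ ^ 2 •
          ((e1 ^ 2 * e2 - (q ^ 2 + q⁻¹ ^ 2) • (e1 * e2 * e1) + e2 * e1 ^ 2) * (e2 * e2)) := by
      subst hz' hw he3
      simp only [pow_succ, pow_zero, one_mul, mul_sub, sub_mul, mul_add, add_mul,
        smul_mul_assoc, mul_smul_comm, smul_smul, smul_sub, smul_add, mul_assoc]
      match_scalars
      all_goals try simp only [mul_one, one_mul, mul_assoc, inv_mul_cancel_left₀ hq,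
        mul_inv_cancel_left₀ hq, inv_mul_cancel₀ hq, mul_inv_cancel₀ hq]
      all_goals try ring
      all_goals norm_num
    rw [hS1, hS2] at key
    simp only [mul_zero, zero_mul, smul_zero, add_zero, sub_zero, zero_add, zero_sub, neg_zero] at key
    exact sub_eq_zero.mp key
end

section
/- In U⁺ = U_q^+(g) for g of type B_2, with z = e_2e_3 − q²e_3e_2, ē_3 = e_1e_2 − q^{−2}e_2e_1, e_3 = e_1e_2 − q²e_2e_1, and z' = e_1w − q^{−4}we_1 where w = e_2e_3 − e_3e_2, one has z' = (1 − q^{−2})(e_3ē_3 + (1 + q^{−2})z e_1). -/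
/-- In `U⁺ = U_q⁺(g)` for `g` of type `B₂`, with `z = e₂e₃ - q²e₃e₂`,
`ē₃ = e₁e₂ - q⁻²e₂e₁`, `e₃ = e₁e₂ - q²e₂e₁` and `z' = e₁w - q⁻⁴we₁` where
`w = e₂e₃ - e₃e₂`, one has `z' = (1 - q⁻²)(e₃ē₃ + (1 + q⁻²)ze₁)`. -/
theorem stmt11 (k : Type*) [Field k] [CharZero k] (q : k) (hq : q ≠ 0)
    (hroot : ∀ n : ℕ, 0 < n → q ^ n ≠ 1)
    (A : Type*) [Ring A] [Algebra k A] (e1 e2 : A)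
    (hS1 : e1 ^ 2 * e2 - (q ^ 2 + q⁻¹ ^ 2) • (e1 * e2 * e1) + e2 * e1 ^ 2 = 0)
    (hS2 : e2 ^ 3 * e1 - (q ^ 2 + 1 + q⁻¹ ^ 2) • (e2 ^ 2 * e1 * e2)
        + (q ^ 2 + 1 + q⁻¹ ^ 2) • (e2 * e1 * e2 ^ 2) - e1 * e2 ^ 3 = 0)
    (e3 e3bar z w z' : A)
    (he3 : e3 = e1 * e2 - q ^ 2 • (e2 * e1))
    (he3bar : e3bar = e1 * e2 - q⁻¹ ^ 2 • (e2 * e1))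
    (hz : z = e2 * e3 - q ^ 2 • (e3 * e2))
    (hw : w = e2 * e3 - e3 * e2)
    (hz' : z' = e1 * w - q⁻¹ ^ 4 • (w * e1)) :
    z' = (1 - q⁻¹ ^ 2) • (e3 * e3bar + (1 + q⁻¹ ^ 2) • (z * e1)) := by
  subst he3 he3bar hz hw hz'
  rw [← sub_eq_zero]
  have h1 : e2 * (e1 ^ 2 * e2 - (q ^ 2 + q⁻¹ ^ 2) • (e1 * e2 * e1) + e2 * e1 ^ 2) = 0 := by
    rw [hS1, mul_zero]
  have h2 : (e1 ^ 2 * e2 - (q ^ 2 + q⁻¹ ^ 2) • (e1 * e2 * e1) + e2 * e1 ^ 2) * e2 = 0 := by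
    rw [hS1, zero_mul]
  have key :
      (e1 * (e2 * (e1 * e2 - q ^ 2 • (e2 * e1)) - (e1 * e2 - q ^ 2 • (e2 * e1)) * e2)
          - q⁻¹ ^ 4 • ((e2 * (e1 * e2 - q ^ 2 • (e2 * e1))
            - (e1 * e2 - q ^ 2 • (e2 * e1)) * e2) * e1))
        - (1 - q⁻¹ ^ 2) •
          ((e1 * e2 - q ^ 2 • (e2 * e1)) * (e1 * e2 - q⁻¹ ^ 2 • (e2 * e1))
            + (1 + q⁻¹ ^ 2) •
              ((e2 * (e1 * e2 - q ^ 2 • (e2 * e1))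
                - q ^ 2 • ((e1 * e2 - q ^ 2 • (e2 * e1)) * e2)) * e1))
      = q ^ 2 • (e2 * (e1 ^ 2 * e2 - (q ^ 2 + q⁻¹ ^ 2) • (e1 * e2 * e1) + e2 * e1 ^ 2))
        - (e1 ^ 2 * e2 - (q ^ 2 + q⁻¹ ^ 2) • (e1 * e2 * e1) + e2 * e1 ^ 2) * e2 := by
    simp only [pow_two, mul_sub, sub_mul, mul_add, add_mul, smul_sub, smul_add,
      smul_mul_assoc, mul_smul_comm, smul_smul, mul_assoc]
    match_scalars <;> try ring
    all_goals (field_simp; try ring)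

  rw [key, h1, h2, smul_zero, sub_zero]
end

section
/- Let A⁺ be the subalgebra of a k-algebra generated by elements e_2, e_3, w satisfying e_2w = q²we_2, e_3w = q^{−2}we_3, e_3e_2 = e_2e_3 − w (with q ∈ k^× not a root of unity). Then the element z = (1 − q²)e_3e_2 + w commutes with e_2, e_3, and w, i.e. z is central in A⁺. -/
/-- Let `A⁺` be (the subalgebra of a `k`-algebra) generated by elements `e₂, e₃, w`
satisfying `e₂w = q²we₂`, `e₃w = q⁻²we₃`, `e₃e₂ = e₂e₃ - w`. Then the element
`z = (1 - q²)e₃e₂ + w` commutes with `e₂`, `e₃` and `w`, i.e. `z` is central in `A⁺`. -/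
theorem stmt15 (k : Type*) [Field k] [CharZero k] (q : k) (hq : q ≠ 0)
    (hroot : ∀ n : ℕ, 0 < n → q ^ n ≠ 1)
    (A : Type*) [Ring A] [Algebra k A] (e2 e3 w : A)
    (h1 : e2 * w = q ^ 2 • (w * e2))
    (h2 : e3 * w = q⁻¹ ^ 2 • (w * e3))
    (h3 : e3 * e2 = e2 * e3 - w)
    (z : A) (hzdef : z = (1 - q ^ 2) • (e3 * e2) + w) :
    z * e2 = e2 * z ∧ z * e3 = e3 * z ∧ z * w = w * z ∧
      ∀ x ∈ Algebra.adjoin k {e2, e3, w}, z * x = x * z := by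
  have h1' : ∀ x : A, e2 * (w * x) = q ^ 2 • (w * (e2 * x)) := fun x => by
    rw [← mul_assoc, h1, smul_mul_assoc, mul_assoc]
  have h2' : ∀ x : A, e3 * (w * x) = q⁻¹ ^ 2 • (w * (e3 * x)) := fun x => by
    rw [← mul_assoc, h2, smul_mul_assoc, mul_assoc]
  have h3' : ∀ x : A, e3 * (e2 * x) = e2 * (e3 * x) - w * x := fun x => by
    rw [← mul_assoc, h3, sub_mul, mul_assoc]
  have he2 : z * e2 = e2 * z := by
    rw [hzdef]
    simp only [add_mul, mul_add, sub_mul, mul_sub, smul_sub, smul_add, smul_mul_assoc,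
      mul_smul_comm, mul_assoc, h1, h2, h3, h1', h2', h3', smul_smul]
    match_scalars <;> (field_simp; try ring)
  have he3 : z * e3 = e3 * z := by
    rw [hzdef]
    simp only [add_mul, mul_add, sub_mul, mul_sub, smul_sub, smul_add, smul_mul_assoc,
      mul_smul_comm, mul_assoc, h1, h2, h3, h1', h2', h3', smul_smul]
    match_scalars <;> (field_simp; try ring)
  have hw : z * w = w * z := by
    rw [hzdef]
    simp only [add_mul, mul_add, sub_mul, mul_sub, smul_sub, smul_add, smul_mul_assoc,
      mul_smul_comm, mul_assoc, h1, h2, h3, h1', h2', h3', smul_smul]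
    match_scalars <;> (field_simp; try ring)
  refine ⟨he2, he3, hw, ?_⟩
  intro x hx
  induction hx using Algebra.adjoin_induction with
  | mem y hy =>
    rcases hy with rfl | rfl | rfl
    · exact he2
    · exact he3
    · exact hw
  | algebraMap r => exact (Algebra.commutes r z).symm
  | add a b _ _ ha hb => rw [mul_add, add_mul, ha, hb]
  | mul a b _ _ ha hb => rw [← mul_assoc, ha, mul_assoc, hb, mul_assoc]
end

section
/- Let A' be the k-algebra generated by e_1, ē_3, w̄ with relations e_1ē_3 = q²ē_3e_1, w̄ē_3 = q^{−2}ē_3w̄, w̄e_1 = e_1w̄ + (q²−1)ē_3² (q ∈ k^× not a root of unity). Then the element u = (1 − q^{−4})e_1w̄ + (q²−1)ē_3² commutes with e_1, ē_3, and w̄, i.e. u is central in A'. -/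
/-- Let `A'` be the `k`-algebra generated by `e₁, ē₃, w̄` with relations
`e₁ē₃ = q²ē₃e₁`, `w̄ē₃ = q⁻²ē₃w̄`, `w̄e₁ = e₁w̄ + (q² - 1)ē₃²`. Then the element
`u = (1 - q⁻⁴)e₁w̄ + (q² - 1)ē₃²` commutes with `e₁`, `ē₃` and `w̄`,
i.e. `u` is central in `A'`. -/
theorem stmt16 (k : Type*) [Field k] [CharZero k] (q : k) (hq : q ≠ 0)
    (hroot : ∀ n : ℕ, 0 < n → q ^ n ≠ 1)
    (A : Type*) [Ring A] [Algebra k A] (e1 e3bar wbar : A)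
    (h1 : e1 * e3bar = q ^ 2 • (e3bar * e1))
    (h2 : wbar * e3bar = q⁻¹ ^ 2 • (e3bar * wbar))
    (h3 : wbar * e1 = e1 * wbar + (q ^ 2 - 1) • e3bar ^ 2)
    (u : A) (hudef : u = (1 - q⁻¹ ^ 4) • (e1 * wbar) + (q ^ 2 - 1) • e3bar ^ 2) :
    u * e1 = e1 * u ∧ u * e3bar = e3bar * u ∧ u * wbar = wbar * u ∧
      ∀ x ∈ Algebra.adjoin k {e1, e3bar, wbar}, u * x = x * u := by
  have hq2 : (q : k) ^ 2 ≠ 0 := pow_ne_zero 2 hq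
  have h1' : e3bar * e1 = q⁻¹ ^ 2 • (e1 * e3bar) := by
    rw [h1, smul_smul, inv_pow, inv_mul_cancel₀ hq2, one_smul]
  have h2' : e3bar * wbar = q ^ 2 • (wbar * e3bar) := by
    rw [h2, smul_smul, inv_pow, mul_inv_cancel₀ hq2, one_smul]
  -- key noncommutative moves
  have k1 : e3bar ^ 2 * e1 = q⁻¹ ^ 4 • (e1 * e3bar ^ 2) := by
    rw [pow_two, mul_assoc, h1', mul_smul_comm, ← mul_assoc, h1', smul_mul_assoc,
      smul_smul, mul_assoc, ← pow_two]
    module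
  have k2 : wbar * e3bar ^ 2 = q⁻¹ ^ 4 • (e3bar ^ 2 * wbar) := by
    rw [pow_two, ← mul_assoc, h2, smul_mul_assoc, mul_assoc, h2, mul_smul_comm,
      smul_smul, ← mul_assoc, ← pow_two]
    module
  have k3 : e1 * wbar * e1 = e1 * (e1 * wbar) + (q ^ 2 - 1) • (e1 * e3bar ^ 2) := by
    rw [mul_assoc, h3, mul_add, mul_smul_comm]
  have k4 : wbar * (e1 * wbar) = e1 * wbar * wbar + (q ^ 2 - 1) • (e3bar ^ 2 * wbar) := by
    rw [← mul_assoc, h3, add_mul, smul_mul_assoc]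
  have k5 : e1 * wbar * e3bar = e3bar * (e1 * wbar) := by
    calc e1 * wbar * e3bar = e1 * (wbar * e3bar) := by rw [mul_assoc]
      _ = q⁻¹ ^ 2 • (e1 * e3bar * wbar) := by rw [h2, mul_smul_comm, mul_assoc]
      _ = q⁻¹ ^ 2 • (q ^ 2 • (e3bar * e1 * wbar)) := by rw [h1, smul_mul_assoc]
      _ = e3bar * (e1 * wbar) := by
          rw [smul_smul, inv_pow, inv_mul_cancel₀ hq2, one_smul, mul_assoc]
  have ce1 : u * e1 = e1 * u := by
    rw [hudef, add_mul, smul_mul_assoc, smul_mul_assoc, k3, k1, mul_add,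
      mul_smul_comm, mul_smul_comm, smul_add, smul_smul, smul_smul]
    module
  have ce3 : u * e3bar = e3bar * u := by
    rw [hudef, add_mul, smul_mul_assoc, smul_mul_assoc, k5, mul_add,
      mul_smul_comm, mul_smul_comm, ← pow_succ, ← pow_succ']
  have cw : u * wbar = wbar * u := by
    rw [hudef, add_mul, smul_mul_assoc, smul_mul_assoc, mul_add,
      mul_smul_comm, mul_smul_comm, k4, k2, smul_add, smul_smul, smul_smul]
    module
  refine ⟨ce1, ce3, cw, ?_⟩
  intro x hx
  induction hx using Algebra.adjoin_induction with
  | mem y hy =>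
      rcases hy with rfl | rfl | rfl
      · exact ce1
      · exact ce3
      · exact cw
  | algebraMap r => exact (Algebra.commutes r u).symm
  | add a b _ _ ha hb => rw [mul_add, add_mul, ha, hb]
  | mul a b _ _ ha hb => rw [← mul_assoc, ha, mul_assoc, hb, mul_assoc]
end
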